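/- (Maximal entanglement via interaction with a local environment only) Let Z be the Pauli matrix Z = |0⟩⟨0| − |1⟩⟨1| on ℂ² and define M = Z ⊗ I ⊗ Z on ℂ² ⊗ ℂ² ⊗ ℂ² (coupling only the first qubit A and the third qubit C). Let |±⟩ = (e₀ ± e₁)/√2, ψ_m = (|+⟩⊗|−⟩ + |−⟩⊗|+⟩)/√2, ψ̃_m = (|−⟩⊗|−⟩ + |+⟩⊗|+⟩)/√2, and ρ(0) = (1/2)|ψ_m⟩⟨ψ_m| ⊗ |0⟩⟨0| + (1/2)|ψ̃_m⟩⟨ψ̃_m| ⊗ |1⟩⟨1|. Then the reduced state ρ_{AB}(π/4) = tr_C( exp(−i(π/4)M) ρ(0) exp(i(π/4)M) ) is pure (tr ρ_{AB}(π/4)² = 1), has negativity 1/2 with respect to the bipartition A : B, and both of its single-qubit marginals equal I/2; that is, the two principal qubits become maximally entangled even though qubit B is never operated on. -/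

import Mathlib

open scoped Matrix Kronecker ComplexOrder

noncomputable section

/-- Hermitian inner product on `n → ℂ` (conjugate-linear in the first argument). -/
def cinner {n : Type*} [Fintype n] (v w : n → ℂ) : ℂ :=
  ∑ i, (starRingEnd ℂ) (v i) * w i

/-- Tensor (Kronecker) product of vectors. -/
def tensorVec {α β : Type*} (v : α → ℂ) (w : β → ℂ) : α × β → ℂ :=
  fun p => v p.1 * w p.2

/-- The projector `|v⟩⟨v|`. -/
def vecProj {n : Type*} (v : n → ℂ) : Matrix n n ℂ :=
  Matrix.of fun i j => v i * (starRingEnd ℂ) (v j)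

/-- A density matrix: positive semidefinite with unit trace. -/
def IsDensityMatrix {n : Type*} [Fintype n] (ρ : Matrix n n ℂ) : Prop :=
  ρ.PosSemidef ∧ ρ.trace = 1

open Classical in
/-- Positive semidefinite square root (0 on non-PSD input). -/
def msqrt {n : Type*} [Fintype n] [DecidableEq n] (ρ : Matrix n n ℂ) : Matrix n n ℂ :=
  if h : ρ.PosSemidef then
    (h.1.eigenvectorUnitary : Matrix n n ℂ) *
      Matrix.diagonal ((↑) ∘ (Real.sqrt ·) ∘ h.1.eigenvalues) *
      (star h.1.eigenvectorUnitary : Matrix n n ℂ)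
  else 0

/-- Uhlmann root fidelity `F(ρ,σ) = tr √(√ρ σ √ρ)`. -/
def rootFidelity {n : Type*} [Fintype n] [DecidableEq n] (ρ σ : Matrix n n ℂ) : ℝ :=
  ((msqrt (msqrt ρ * σ * msqrt ρ)).trace).re

/-- Partial trace over the second tensor factor. -/
def ptraceC {α γ : Type*} [Fintype γ] (ρ : Matrix (α × γ) (α × γ) ℂ) : Matrix α α ℂ :=
  Matrix.of fun i j => ∑ k, ρ (i, k) (j, k)

/-- Partial trace over the first tensor factor. -/
def ptraceA {α β : Type*} [Fintype α] (ρ : Matrix (α × β) (α × β) ℂ) : Matrix β β ℂ :=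
  Matrix.of fun i j => ∑ k, ρ (k, i) (k, j)

/-- Partial transpose on the second tensor factor. -/
def ptB {α β : Type*} (ρ : Matrix (α × β) (α × β) ℂ) : Matrix (α × β) (α × β) ℂ :=
  Matrix.of fun p q => ρ (p.1, q.2) (q.1, p.2)

open Classical in
/-- Negativity: the sum of the absolute values of the negative eigenvalues of
the partial transpose (0 if the partial transpose is not Hermitian). -/
def negativity {α β : Type*} [Fintype α] [Fintype β] [DecidableEq α] [DecidableEq β]
    (ρ : Matrix (α × β) (α × β) ℂ) : ℝ :=
  if h : (ptB ρ).IsHermitian then ∑ i, max 0 (- h.eigenvalues i) else 0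

/-- A family of vectors is an orthonormal basis family (orthonormal, indexed by the
same finite type as the dimension, hence a basis). -/
def IsONB {n : Type*} [Fintype n] [DecidableEq n] (x : n → n → ℂ) : Prop :=
  ∀ j k, cinner (x j) (x k) = if j = k then 1 else 0

/-- Separability: a finite convex combination of projectors onto product unit vectors. -/
def IsSeparableDM {α β : Type*} [Fintype α] [Fintype β]
    (ρ : Matrix (α × β) (α × β) ℂ) : Prop :=
  ∃ (m : ℕ) (p : Fin m → ℝ) (a : Fin m → α → ℂ) (b : Fin m → β → ℂ),
    (∀ j, 0 ≤ p j) ∧ (∑ j, p j = 1) ∧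
    (∀ j, cinner (a j) (a j) = 1) ∧ (∀ j, cinner (b j) (b j) = 1) ∧
    ρ = ∑ j, (p j : ℂ) • vecProj (tensorVec (a j) (b j))

/-- A maximally entangled state on `ℂ^d ⊗ ℂ^d`. -/
def IsMaxEnt {d : ℕ} (Ψ : Fin d × Fin d → ℂ) : Prop :=
  ∃ x y : Fin d → Fin d → ℂ, IsONB x ∧ IsONB y ∧
    Ψ = ((Real.sqrt d : ℂ)⁻¹) • ∑ j, tensorVec (x j) (y j)

/-- Standard basis vector `e₀` of `ℂ²`. -/
def qe0 : Fin 2 → ℂ := ![1, 0]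

/-- Standard basis vector `e₁` of `ℂ²`. -/
def qe1 : Fin 2 → ℂ := ![0, 1]

/-- Pauli `X` matrix. -/
def pX : Matrix (Fin 2) (Fin 2) ℂ := !![0, 1; 1, 0]

/-- Pauli `Y` matrix. -/
def pY : Matrix (Fin 2) (Fin 2) ℂ := !![0, -Complex.I; Complex.I, 0]

/-- Pauli `Z` matrix. -/
def pZ : Matrix (Fin 2) (Fin 2) ℂ := !![1, 0; 0, -1]

/-- `|+⟩ = (e₀ + e₁)/√2`. -/
def qplus : Fin 2 → ℂ := (((Real.sqrt 2 : ℝ) : ℂ))⁻¹ • (qe0 + qe1)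

/-- `|−⟩ = (e₀ − e₁)/√2`. -/
def qminus : Fin 2 → ℂ := (((Real.sqrt 2 : ℝ) : ℂ))⁻¹ • (qe0 - qe1)

/-- `ψ_m = (|+−⟩ + |−+⟩)/√2`. -/
def ψm : Fin 2 × Fin 2 → ℂ :=
  (((Real.sqrt 2 : ℝ) : ℂ))⁻¹ • (tensorVec qplus qminus + tensorVec qminus qplus)

/-- `ψ̃_m = (|−−⟩ + |++⟩)/√2`. -/
def ψtm : Fin 2 × Fin 2 → ℂ :=
  (((Real.sqrt 2 : ℝ) : ℂ))⁻¹ • (tensorVec qminus qminus + tensorVec qplus qplus)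

/-- The classically correlated initial state
`ρ(0) = ½|ψ_m⟩⟨ψ_m| ⊗ |0⟩⟨0| + ½|ψ̃_m⟩⟨ψ̃_m| ⊗ |1⟩⟨1|`. -/
def ρcls : Matrix ((Fin 2 × Fin 2) × Fin 2) ((Fin 2 × Fin 2) × Fin 2) ℂ :=
  (2⁻¹ : ℂ) • (vecProj ψm ⊗ₖ vecProj qe0) + (2⁻¹ : ℂ) • (vecProj ψtm ⊗ₖ vecProj qe1)

/-- The Hamiltonian `M = Z ⊗ I ⊗ Z`, coupling only qubit `A` to its local
environment `C`. -/
def Mloc : Matrix ((Fin 2 × Fin 2) × Fin 2) ((Fin 2 × Fin 2) × Fin 2) ℂ :=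
  (pZ ⊗ₖ (1 : Matrix (Fin 2) (Fin 2) ℂ)) ⊗ₖ pZ

/-- The reduced state of `AB` at time `π/4`. -/
def ρABloc : Matrix (Fin 2 × Fin 2) (Fin 2 × Fin 2) ℂ :=
  ptraceC (NormedSpace.exp ((-(Complex.I * ((Real.pi / 4 : ℝ) : ℂ))) • Mloc) * ρcls *
    NormedSpace.exp ((Complex.I * ((Real.pi / 4 : ℝ) : ℂ)) • Mloc))

/-!
Since `M` is diagonal, the evolution acts on the branch `ψ ⊗ |c⟩` of the classically correlated
initial state as the local phase gate `exp (∓ i π/4 Z)` on qubit `A`. This gate rotates both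
`ψ_m = (|00⟩ - |11⟩)/√2` and `ψ̃_m = (|00⟩ + |11⟩)/√2` onto the same Bell state
`(|00⟩ - i |11⟩)/√2` up to a global phase, so tracing out `C` leaves that pure state.
Its partial transpose is Hermitian with square `I/4` and trace `1`, so its eigenvalues are `±1/2`
with exactly one equal to `-1/2`.
-/

open Matrix Complex

section General

variable {ι α β γ : Type*}

lemma conj_mul_self_of_norm_eq_one {z : ℂ} (hz : ‖z‖ = 1) : starRingEnd ℂ z * z = 1 := by
  simpa [hz] using Complex.conj_mul' z

lemma vecProj_mul_self [Fintype ι] (v : ι → ℂ) :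
    vecProj v * vecProj v = cinner v v • vecProj v := by
  ext i j
  simp only [vecProj, mul_apply, of_apply, Matrix.smul_apply, smul_eq_mul, cinner,
    Finset.sum_mul]
  exact Finset.sum_congr rfl fun k _ => by ring

lemma trace_vecProj [Fintype ι] (v : ι → ℂ) : (vecProj v).trace = cinner v v := by
  simp only [trace, diag, vecProj, of_apply, cinner]
  exact Finset.sum_congr rfl fun i _ => mul_comm _ _

lemma trace_vecProj_mul_self_of_cinner_eq_one [Fintype ι] {v : ι → ℂ} (hv : cinner v v = 1) :
    (vecProj v * vecProj v).trace = 1 := by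
  rw [vecProj_mul_self, hv, one_smul, trace_vecProj, hv]

lemma vecProj_smul_of_norm_eq_one {z : ℂ} (hz : ‖z‖ = 1) (v : ι → ℂ) :
    vecProj (z • v) = vecProj v := by
  ext i j
  simp only [vecProj, of_apply, Pi.smul_apply, smul_eq_mul, map_mul]
  linear_combination (v i * starRingEnd ℂ (v j)) * conj_mul_self_of_norm_eq_one hz

lemma isHermitian_vecProj (v : ι → ℂ) : (vecProj v).IsHermitian := by
  ext i j
  simp [vecProj, mul_comm]

lemma Matrix.IsHermitian.ptB {ρ : Matrix (α × β) (α × β) ℂ} (hρ : ρ.IsHermitian) :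
    (ptB ρ).IsHermitian := by
  ext p q
  simpa [_root_.ptB] using congrFun (congrFun hρ (p.1, q.2)) (q.1, p.2)

lemma trace_ptB [Fintype α] [Fintype β] (ρ : Matrix (α × β) (α × β) ℂ) :
    (ptB ρ).trace = ρ.trace := rfl

lemma ptraceC_add [Fintype γ] (ρ σ : Matrix (α × γ) (α × γ) ℂ) :
    ptraceC (ρ + σ) = ptraceC ρ + ptraceC σ := by
  ext i j
  simp [ptraceC, Finset.sum_add_distrib]

lemma ptraceC_smul [Fintype γ] (z : ℂ) (ρ : Matrix (α × γ) (α × γ) ℂ) :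
    ptraceC (z • ρ) = z • ptraceC ρ := by
  ext i j
  simp [ptraceC, Finset.mul_sum]

lemma ptraceC_diagonal_mul_kronecker_single_mul_diagonal [Fintype α] [Fintype γ]
    [DecidableEq α] [DecidableEq γ] (u : α × γ → ℂ) (v : α → ℂ) (c : γ) :
    ptraceC (diagonal u * (vecProj v ⊗ₖ vecProj (Pi.single c 1)) * diagonal (star u)) =
      vecProj fun a => u (a, c) * v a := by
  ext i j
  simp [ptraceC, vecProj, Pi.single_apply]
  ring

lemma exp_smul_diagonal [Fintype ι] [DecidableEq ι] (z : ℂ) (d : ι → ℂ) :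
    NormedSpace.exp (z • diagonal d) = diagonal fun i => Complex.exp (z * d i) := by
  rw [← diagonal_smul, Matrix.exp_diagonal]
  congr 1
  funext i
  rw [Pi.exp_def, ← Complex.exp_eq_exp_ℂ]
  rfl

lemma Matrix.IsHermitian.eigenvalues_eq_or_eq_neg_of_mul_self [Fintype ι] [DecidableEq ι]
    {A : Matrix ι ι ℂ} (hA : A.IsHermitian) {r : ℝ} (hsq : A * A = ((r ^ 2 : ℝ) : ℂ) • 1)
    (i : ι) : hA.eigenvalues i = r ∨ hA.eigenvalues i = -r := by
  set v : ι → ℂ := ⇑(hA.eigenvectorBasis i)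
  have hv : v ≠ 0 := fun h =>
    hA.eigenvectorBasis.orthonormal.ne_zero i (by ext j; exact congrFun h j)
  have hAv : A *ᵥ v = hA.eigenvalues i • v := hA.mulVec_eigenvectorBasis i
  have hsqv : hA.eigenvalues i ^ 2 • v = r ^ 2 • v := by
    calc hA.eigenvalues i ^ 2 • v = A *ᵥ (A *ᵥ v) := by
          rw [hAv, mulVec_smul, hAv, smul_smul, sq]
      _ = r ^ 2 • v := by
          rw [mulVec_mulVec, hsq, smul_mulVec, one_mulVec, Complex.coe_smul]
  exact sq_eq_sq_iff_eq_or_eq_neg.mp (smul_left_injective ℝ hv hsqv)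

open Classical in
lemma negativity_eq_of_ptB_mul_self [Fintype α] [Fintype β] [DecidableEq α] [DecidableEq β]
    {ρ : Matrix (α × β) (α × β) ℂ} (hρ : ρ.IsHermitian) {r : ℝ}
    (hsq : ptB ρ * ptB ρ = ((r ^ 2 : ℝ) : ℂ) • 1) (hr : 0 ≤ r) :
    negativity ρ = (Fintype.card (α × β) * r - ρ.trace.re) / 2 := by
  have hH := hρ.ptB
  have hneg (i) : max 0 (-hH.eigenvalues i) = (r - hH.eigenvalues i) / 2 := by
    rcases hH.eigenvalues_eq_or_eq_neg_of_mul_self hsq i with h | h <;> rw [h] <;> simp [hr]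
  have htrace : ρ.trace.re = ∑ i, hH.eigenvalues i := by
    simpa [trace_ptB] using congrArg Complex.re hH.trace_eq_sum_eigenvalues
  rw [negativity, dif_pos hH, Finset.sum_congr rfl fun i _ => hneg i, ← Finset.sum_div,
    Finset.sum_sub_distrib, htrace]
  simp

end General

def zSign : Fin 2 → ℝ := ![1, -1]

lemma pZ_eq_diagonal : pZ = diagonal fun a => (zSign a : ℂ) := by
  ext a b
  fin_cases a <;> fin_cases b <;> simp [pZ, zSign]

lemma exp_smul_Mloc (z : ℂ) :
    NormedSpace.exp (z • Mloc) =
      diagonal fun p => Complex.exp (z * (zSign p.1.1 * zSign p.2 : ℝ)) := by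
  rw [Mloc, pZ_eq_diagonal, ← diagonal_one, diagonal_kronecker_diagonal,
    diagonal_kronecker_diagonal, exp_smul_diagonal]
  simp

/-- The Bell state `(|00⟩ + ω |11⟩)/√2`. -/
def bell (ω : ℂ) : Fin 2 × Fin 2 → ℂ :=
  (((Real.sqrt 2 : ℝ) : ℂ))⁻¹ • fun p => !![1, 0; 0, ω] p.1 p.2

lemma ofReal_sqrt_two_sq : (((Real.sqrt 2 : ℝ) : ℂ)) ^ 2 = 2 := by
  rw [← Complex.ofReal_pow, Real.sq_sqrt zero_le_two]
  norm_num

lemma ψm_eq_bell : ψm = bell (-1) := by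
  have := ofReal_sqrt_two_sq
  ext ⟨a, b⟩
  fin_cases a <;> fin_cases b <;> simp [ψm, bell, tensorVec, qplus, qminus, qe0, qe1] <;>
    grind

lemma ψtm_eq_bell : ψtm = bell 1 := by
  have := ofReal_sqrt_two_sq
  ext ⟨a, b⟩
  fin_cases a <;> fin_cases b <;> simp [ψtm, bell, tensorVec, qplus, qminus, qe0, qe1] <;>
    grind

lemma exp_zSign_mul_bell (θ : ℝ) (ω : ℂ) :
    (fun p : Fin 2 × Fin 2 => Complex.exp (-(I * θ) * zSign p.1) * bell ω p) =
      Complex.exp (-(I * θ)) • bell (Complex.exp (2 * θ * I) * ω) := by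
  have h : Complex.exp (I * θ) = Complex.exp (-(I * θ)) * Complex.exp (2 * θ * I) := by
    rw [← Complex.exp_add]
    ring_nf
  ext ⟨a, b⟩
  fin_cases a <;> fin_cases b <;> simp [bell, zSign]
  linear_combination (Real.sqrt 2 : ℂ)⁻¹ * ω * h

section Bell

variable {ω : ℂ} (hω : ‖ω‖ = 1)
include hω

lemma cinner_bell_self : cinner (bell ω) (bell ω) = 1 := by
  have := conj_mul_self_of_norm_eq_one hω
  have := ofReal_sqrt_two_sq
  simp [cinner, bell, Fintype.sum_prod_type]
  grind

lemma ptraceC_vecProj_bell : ptraceC (vecProj (bell ω)) = (2⁻¹ : ℂ) • 1 := by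
  have := conj_mul_self_of_norm_eq_one hω
  have := ofReal_sqrt_two_sq
  ext i j
  fin_cases i <;> fin_cases j <;> simp [ptraceC, vecProj, bell] <;> grind

lemma ptraceA_vecProj_bell : ptraceA (vecProj (bell ω)) = (2⁻¹ : ℂ) • 1 := by
  have := conj_mul_self_of_norm_eq_one hω
  have := ofReal_sqrt_two_sq
  ext i j
  fin_cases i <;> fin_cases j <;> simp [ptraceA, vecProj, bell] <;> grind

lemma ptB_vecProj_bell_mul_self :
    ptB (vecProj (bell ω)) * ptB (vecProj (bell ω)) = (((1 / 2 : ℝ) ^ 2 : ℝ) : ℂ) • 1 := by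
  have := conj_mul_self_of_norm_eq_one hω
  have := ofReal_sqrt_two_sq
  ext ⟨a, b⟩ ⟨c, d⟩
  fin_cases a <;> fin_cases b <;> fin_cases c <;> fin_cases d <;>
    simp [ptB, vecProj, bell, mul_apply, Fintype.sum_prod_type] <;> grind

end Bell

lemma ρcls_eq_bell : ρcls =
    (2⁻¹ : ℂ) • (vecProj (bell (-1)) ⊗ₖ vecProj (Pi.single 0 1)) +
      (2⁻¹ : ℂ) • (vecProj (bell 1) ⊗ₖ vecProj (Pi.single 1 1)) := by
  have hqe0 : qe0 = Pi.single 0 1 := by ext i; fin_cases i <;> rfl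
  have hqe1 : qe1 = Pi.single 1 1 := by ext i; fin_cases i <;> rfl
  rw [ρcls, ψm_eq_bell, ψtm_eq_bell, hqe0, hqe1]

lemma ptraceC_evolve_ρcls (t : ℝ) :
    ptraceC (NormedSpace.exp ((-(I * t)) • Mloc) * ρcls * NormedSpace.exp ((I * t) • Mloc)) =
      (2⁻¹ : ℂ) • vecProj (bell (-Complex.exp (2 * t * I))) +
        (2⁻¹ : ℂ) • vecProj (bell (Complex.exp (2 * (-t : ℝ) * I))) := by
  set u : (Fin 2 × Fin 2) × Fin 2 → ℂ :=
    fun p => Complex.exp (-(I * t) * (zSign p.1.1 * zSign p.2 : ℝ))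
  have hstar : NormedSpace.exp ((I * t) • Mloc) = diagonal (star u) := by
    rw [exp_smul_Mloc]
    congr 1
    funext p
    simp [u, ← Complex.exp_conj]
  have hbranch₀ : (fun a => u (a, 0) * bell (-1) a) =
      Complex.exp (-(I * t)) • bell (-Complex.exp (2 * t * I)) := by
    simpa [u, zSign] using exp_zSign_mul_bell t (-1)
  have hbranch₁ : (fun a => u (a, 1) * bell 1 a) =
      Complex.exp (-(I * (-t : ℝ))) • bell (Complex.exp (2 * (-t : ℝ) * I)) := by
    simpa [u, zSign] using exp_zSign_mul_bell (-t) 1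
  rw [hstar, exp_smul_Mloc, ρcls_eq_bell, mul_add, add_mul, mul_smul_comm, smul_mul_assoc,
    mul_smul_comm, smul_mul_assoc, ptraceC_add, ptraceC_smul, ptraceC_smul,
    ptraceC_diagonal_mul_kronecker_single_mul_diagonal,
    ptraceC_diagonal_mul_kronecker_single_mul_diagonal, hbranch₀, hbranch₁,
    vecProj_smul_of_norm_eq_one, vecProj_smul_of_norm_eq_one]
  all_goals simp [Complex.norm_exp]

lemma ρABloc_eq_vecProj_bell : ρABloc = vecProj (bell (-I)) := by
  have hplus : Complex.exp (2 * ((Real.pi / 4 : ℝ) : ℂ) * I) = I := by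
    rw [show 2 * ((Real.pi / 4 : ℝ) : ℂ) * I = Real.pi / 2 * I by push_cast; ring,
      Complex.exp_pi_div_two_mul_I]
  have hminus : Complex.exp (2 * ((-(Real.pi / 4) : ℝ) : ℂ) * I) = -I := by
    rw [show 2 * ((-(Real.pi / 4) : ℝ) : ℂ) * I = -Real.pi / 2 * I by push_cast; ring,
      Complex.exp_neg_pi_div_two_mul_I]
  rw [ρABloc, ptraceC_evolve_ρcls, hplus, hminus, ← add_smul]
  norm_num

/-- maximal entanglement via interaction with a local environment only:
the reduced state at `t = π/4` is pure, maximally entangled (negativity `1/2`), and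
has both single-qubit marginals equal to `I/2`, although qubit `B` was never operated
on. -/
theorem local_environment_entangles :
    (ρABloc * ρABloc).trace = 1 ∧
    negativity ρABloc = 1 / 2 ∧
    ptraceC ρABloc = (2⁻¹ : ℂ) • (1 : Matrix (Fin 2) (Fin 2) ℂ) ∧
    ptraceA ρABloc = (2⁻¹ : ℂ) • (1 : Matrix (Fin 2) (Fin 2) ℂ) := by
  have hω : ‖-I‖ = 1 := by simp
  rw [ρABloc_eq_vecProj_bell]
  refine ⟨trace_vecProj_mul_self_of_cinner_eq_one (cinner_bell_self hω), ?_,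
    ptraceC_vecProj_bell hω, ptraceA_vecProj_bell hω⟩
  rw [negativity_eq_of_ptB_mul_self (isHermitian_vecProj _) (ptB_vecProj_bell_mul_self hω)
    (by norm_num), trace_vecProj, cinner_bell_self hω]
  norm_num
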